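/- Suppose (Q_x)_{x∈E} is a family of finite measures on the path space E^{ℕ} satisfying Q_x(F_n · 1_{X_n = y}) = E_x[F_n 1_{X_n=y}] · (total mass of Q_y) for all n, y and bounded nonnegative F_n measurable with respect to the first n coordinates, where (P_x) is an irreducible recurrent Markov chain. Then there exists c ≥ 0 such that Q_x = c · P_x for all x ∈ E. -/

import Mathlib

/-!
The total masses `m x = Q x univ` form a superharmonic function of the chain: splitting `Q x` at
the first visit to `y` and using the concatenation identity gives `m x ≥ P_x(hit y) * m y`.
Irreducibility, recurrence and the Markov property at a fixed time give `P_x(hit y) = 1`, so `m` is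
a constant `c`. Summing the concatenation identity over the state at time `n` then gives
`c * P_x(A) ≤ Q_x(A)` for every event `A` of the first `n + 1` coordinates; applied to `A` and to
its complement, with equal total masses, this is an equality on cylinders, which generate the
σ-algebra.

The σ-algebra on `E` is arbitrary, so cylinder sets need not be measurable; they are
`P_x`-null-measurable because their outer measures add up to `1`. For the same reason the lower
integrals in the concatenation identity are only superadditive.
-/

open MeasureTheory ENNReal
open scoped Classical NNReal

/-- A (time-homogeneous) Markov chain on a state space `E`, given by its
transition probabilities `p` and the family of path-space laws `P x` (the chain started
at `x`), characterized by its finite-dimensional distributions. -/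
structure MC (E : Type*) [MeasurableSpace E] where
  p : E → E → ℝ≥0∞
  P : E → Measure (ℕ → E)
  prob : ∀ x, IsProbabilityMeasure (P x)
  stochastic : ∀ x, ∑' y, p x y = 1
  fdd : ∀ (x : E) (n : ℕ) (xs : Fin (n + 1) → E),
    P x {ω | ∀ i : Fin (n + 1), ω i = xs i}
      = (if xs 0 = x then 1 else 0) * ∏ i : Fin n, p (xs i.castSucc) (xs i.succ)

/-- Irreducibility: every state is reachable from every state with positive probability. -/
def MC.Irreducible {E : Type*} [MeasurableSpace E] (M : MC E) : Prop :=
  ∀ x y : E, ∃ n : ℕ, 0 < M.P x {ω | ω n = y}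

/-- Recurrence: started from any state, the chain returns to that state infinitely often
almost surely. -/
def MC.Recurrent {E : Type*} [MeasurableSpace E] (M : MC E) : Prop :=
  ∀ x : E, M.P x {ω | ∀ N : ℕ, ∃ n, N ≤ n ∧ ω n = x} = 1

open Function

theorem Set.tsum_indicator_apply_of_pairwise_disjoint {α ι M : Type*} [AddCommMonoid M]
    [TopologicalSpace M] {S : ι → Set α} (hS : Pairwise (Disjoint on S)) (f : α → M) (a : α) :
    ∑' i, (S i).indicator f a = (⋃ i, S i).indicator f a := by
  by_cases ha : a ∈ ⋃ i, S i
  · obtain ⟨i, hi⟩ := Set.mem_iUnion.1 ha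
    rw [tsum_eq_single i fun j hj => Set.indicator_of_notMem
      (Set.disjoint_left.1 (hS hj.symm) hi) _]
    simp [hi, ha]
  · simp only [Set.mem_iUnion, not_exists] at ha
    simp [ha]

namespace MeasureTheory

variable {α ι : Type*} [MeasurableSpace α] {μ ν : Measure α}

theorem nullMeasurableSet_of_measure_add_measure_compl_le [IsFiniteMeasure μ] {s : Set α}
    (h : μ s + μ sᶜ ≤ μ Set.univ) : NullMeasurableSet s μ := by
  set t := toMeasurable μ s
  have hst : s ⊆ t := subset_toMeasurable μ s
  have ht : MeasurableSet t := measurableSet_toMeasurable μ s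
  have hcompl : μ sᶜ = μ (t \ s) + μ tᶜ := by
    rw [← measure_inter_add_sdiff sᶜ ht, Set.inter_comm, ← Set.sdiff_eq, Set.sdiff_eq sᶜ,
      Set.inter_eq_right.2 (Set.compl_subset_compl.2 hst)]
  have hnull : μ (t \ s) = 0 := by
    rw [hcompl, ← measure_toMeasurable s, ← add_assoc, add_right_comm,
      measure_add_measure_compl ht] at h
    exact nonpos_iff_eq_zero.1
      ((ENNReal.cancel_of_ne (measure_ne_top μ _)).add_le_iff_nonpos_right.1 h)
  rw [← Set.sdiff_sdiff_cancel_left hst]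
  exact ht.nullMeasurableSet.diff (NullMeasurableSet.of_null hnull)

theorem nullMeasurableSet_preimage_of_tsum_measure_fiber_le [Countable ι] [IsFiniteMeasure μ]
    {f : α → ι} (hf : ∑' i, μ (f ⁻¹' {i}) ≤ μ Set.univ) (B : Set ι) : NullMeasurableSet (f ⁻¹' B) μ := by
  refine nullMeasurableSet_of_measure_add_measure_compl_le (le_trans ?_ hf)
  rw [← Set.preimage_compl, ← Set.biUnion_preimage_singleton, ← Set.biUnion_preimage_singleton,
    ← ENNReal.summable.tsum_add_tsum_compl ENNReal.summable]
  exact add_le_add (measure_biUnion_le μ B.to_countable _) (measure_biUnion_le μ Bᶜ.to_countable _)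

theorem measure_preimage_eq_tsum_indicator [Countable ι] [IsFiniteMeasure μ] {f : α → ι}
    (hf : ∑' i, μ (f ⁻¹' {i}) ≤ μ Set.univ) (B : Set ι) :
    μ (f ⁻¹' B) = ∑' i, B.indicator (fun i => μ (f ⁻¹' {i})) i := by
  rw [← tsum_subtype, ← Set.biUnion_preimage_singleton, measure_biUnion₀ B.to_countable
    (fun i _ j _ hij => (Set.disjoint_singleton.2 hij).preimage f |>.aedisjoint)
    (fun i _ => nullMeasurableSet_preimage_of_tsum_measure_fiber_le hf {i})]

theorem sum_lintegral_le_lintegral_sum (s : Finset ι) (f : ι → α → ℝ≥0∞) :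
    ∑ i ∈ s, ∫⁻ a, f i a ∂μ ≤ ∫⁻ a, ∑ i ∈ s, f i a ∂μ := by
  induction s using Finset.cons_induction with
  | empty => simp
  | cons i s hi ih =>
    simp only [Finset.sum_cons]
    exact (add_le_add le_rfl ih).trans (le_lintegral_add _ _)

theorem tsum_lintegral_le_lintegral_tsum (f : ι → α → ℝ≥0∞) :
    ∑' i, ∫⁻ a, f i a ∂μ ≤ ∫⁻ a, ∑' i, f i a ∂μ := by
  rw [ENNReal.tsum_eq_iSup_sum]
  exact iSup_le fun s => (sum_lintegral_le_lintegral_sum s f).trans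
    (lintegral_mono fun a => ENNReal.sum_le_tsum s)

theorem tsum_lintegral_indicator_one_le {S : ι → Set α} (hS : Pairwise (Disjoint on S)) :
    ∑' i, ∫⁻ a, (S i).indicator 1 a ∂μ ≤ μ (⋃ i, S i) := by
  calc ∑' i, ∫⁻ a, (S i).indicator 1 a ∂μ ≤ ∫⁻ a, ∑' i, (S i).indicator 1 a ∂μ :=
        tsum_lintegral_le_lintegral_tsum _
    _ = ∫⁻ a, (⋃ i, S i).indicator 1 a ∂μ := by
        simp_rw [Set.tsum_indicator_apply_of_pairwise_disjoint hS]
    _ ≤ μ (⋃ i, S i) := lintegral_indicator_one_le _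

theorem Measure.apply_eq_of_le_of_le_compl [IsFiniteMeasure ν] {s : Set α}
    (huniv : μ Set.univ = ν Set.univ) (hs : MeasurableSet s) (h : μ s ≤ ν s)
    (hcompl : μ sᶜ ≤ ν sᶜ) : μ s = ν s := by
  have hsum : ν s + ν sᶜ = μ s + μ sᶜ := by
    rw [measure_add_measure_compl hs, measure_add_measure_compl hs, huniv]
  refine le_antisymm h ((ENNReal.add_le_add_iff_right (measure_ne_top ν sᶜ)).1 ?_)
  exact hsum.le.trans (add_le_add le_rfl hcompl)

end MeasureTheory

section Paths

variable {E : Type*}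

def pathPrefix (n : ℕ) (ω : ℕ → E) : Fin (n + 1) → E := fun i => ω i

def pathShift (n : ℕ) (ω : ℕ → E) : ℕ → E := fun k => ω (n + k)

def splitTuple (n m : ℕ) (ws : Fin (n + m + 1) → E) : (Fin (n + 1) → E) × (Fin (m + 1) → E) :=
  (fun i => ws (Fin.castLE (by omega) i), fun j => ws (Fin.natAdd n j))

theorem splitTuple_injective (n m : ℕ) : Injective (splitTuple (E := E) n m) := by
  intro ws ws' h
  funext i
  by_cases hi : (i : ℕ) ≤ n
  · exact congrFun (congrArg Prod.fst h) ⟨i, by omega⟩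
  · have := congrFun (congrArg Prod.snd h) ⟨i - n, by omega⟩
    simp only [splitTuple] at this
    convert this using 2 <;> ext <;> simp <;> omega

def avoiding (y : E) (m : ℕ) : Set (Fin (m + 1) → E) :=
  {zs | ∀ j : Fin (m + 1), 0 < (j : ℕ) → zs j ≠ y}

theorem mem_range_splitTuple {n m : ℕ} {xs : Fin (n + 1) → E} {zs : Fin (m + 1) → E}
    (h : zs 0 = xs (Fin.last n)) : (xs, zs) ∈ Set.range (splitTuple n m) := by
  refine ⟨fun i => if hi : (i : ℕ) ≤ n then xs ⟨i, by omega⟩ else zs ⟨i - n, by omega⟩, ?_⟩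
  ext i
  · simp [splitTuple, Fin.is_le]
  · rcases eq_or_ne i 0 with rfl | hi
    · simp [splitTuple, h, Fin.last]
    · simp [splitTuple, hi]

theorem exists_pathPrefix_preimage_eq_of_mem_measurableCylinders [MeasurableSpace E]
    {s : Set (ℕ → E)} (hs : s ∈ measurableCylinders fun _ : ℕ => E) :
    ∃ (n : ℕ) (B : Set (Fin (n + 1) → E)), s = pathPrefix n ⁻¹' B := by
  obtain ⟨I, T, -, rfl⟩ := (mem_measurableCylinders s).1 hs
  have hI : ∀ i : I, (i : ℕ) < I.sup id + 1 := fun i => Nat.lt_succ_of_le (I.le_sup (f := id) i.2)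
  exact ⟨I.sup id, {xs | (fun i : I => xs ⟨i, hI i⟩) ∈ T}, rfl⟩

end Paths

namespace MC

variable {E : Type*} [MeasurableSpace E] (M : MC E)

noncomputable def weight (x : E) {n : ℕ} (xs : Fin (n + 1) → E) : ℝ≥0∞ :=
  (if xs 0 = x then 1 else 0) * ∏ i : Fin n, M.p (xs i.castSucc) (xs i.succ)

theorem measure_pathPrefix_preimage_singleton (x : E) {n : ℕ} (xs : Fin (n + 1) → E) :
    M.P x (pathPrefix n ⁻¹' {xs}) = M.weight x xs := by
  rw [weight, ← M.fdd]
  congr 1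
  ext ω
  simp [pathPrefix, funext_iff]

theorem weight_snoc (x : E) {n : ℕ} (xs : Fin (n + 1) → E) (z : E) :
    M.weight x (Fin.snoc xs z : Fin (n + 2) → E) = M.weight x xs * M.p (xs (Fin.last n)) z := by
  simp only [weight, Fin.prod_univ_castSucc, Fin.snoc_castSucc, Fin.succ_castSucc, Fin.succ_last,
    Fin.snoc_last, mul_assoc]
  rfl

theorem tsum_weight (x : E) (n : ℕ) : ∑' xs : Fin (n + 1) → E, M.weight x xs = 1 := by
  induction n with
  | zero =>
    rw [← (Equiv.funUnique (Fin 1) E).symm.tsum_eq]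
    simp [weight, Equiv.funUnique]
  | succ n ih =>
    rw [← (Fin.snocEquiv fun _ => E).tsum_eq, ENNReal.tsum_prod', ENNReal.tsum_comm]
    simp [Fin.snocEquiv, weight_snoc, ENNReal.tsum_mul_left, M.stochastic, ih]

theorem weight_eq_mul_weight_splitTuple (x : E) {n m : ℕ} (ws : Fin (n + m + 1) → E) :
    M.weight x ws = M.weight x (splitTuple n m ws).1
      * M.weight ((splitTuple n m ws).1 (Fin.last n)) (splitTuple n m ws).2 := by
  have hjoin : (splitTuple n m ws).2 0 = (splitTuple n m ws).1 (Fin.last n) := rfl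
  rw [weight, weight, weight, if_pos hjoin, one_mul, Fin.prod_univ_add, mul_assoc]
  rfl

theorem weight_eq_zero_of_ne {x : E} {n : ℕ} {xs : Fin (n + 1) → E} (h : xs 0 ≠ x) :
    M.weight x xs = 0 := by
  simp [weight, h]

theorem tsum_measure_pathPrefix_fiber (x : E) (n : ℕ) :
    ∑' xs, M.P x (pathPrefix n ⁻¹' {xs}) = M.P x Set.univ := by
  have := M.prob x
  simp [measure_pathPrefix_preimage_singleton, tsum_weight]

section Countable

variable [Countable E]

theorem nullMeasurableSet_pathPrefix_preimage (x : E) {n : ℕ} (B : Set (Fin (n + 1) → E)) :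
    NullMeasurableSet (pathPrefix n ⁻¹' B) (M.P x) :=
  have := M.prob x
  nullMeasurableSet_preimage_of_tsum_measure_fiber_le (M.tsum_measure_pathPrefix_fiber x n).le B

theorem measure_pathPrefix_preimage (x : E) {n : ℕ} (B : Set (Fin (n + 1) → E)) :
    M.P x (pathPrefix n ⁻¹' B) = ∑' xs, B.indicator (M.weight x) xs := by
  have := M.prob x
  rw [measure_preimage_eq_tsum_indicator (M.tsum_measure_pathPrefix_fiber x n).le]
  simp only [measure_pathPrefix_preimage_singleton]

theorem measure_pathPrefix_inter_pathShift (x : E) {n m : ℕ} (B : Set (Fin (n + 1) → E))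
    (C : Set (Fin (m + 1) → E)) :
    M.P x (pathPrefix n ⁻¹' B ∩ pathShift n ⁻¹' (pathPrefix m ⁻¹' C)) =
      ∑' xs, B.indicator
        (fun xs => M.weight x xs * M.P (xs (Fin.last n)) (pathPrefix m ⁻¹' C)) xs := by
  set F : (Fin (n + 1) → E) × (Fin (m + 1) → E) → ℝ≥0∞ := fun p =>
    B.indicator (M.weight x) p.1 * C.indicator (M.weight (p.1 (Fin.last n))) p.2
  have hset : pathPrefix n ⁻¹' B ∩ pathShift n ⁻¹' (pathPrefix m ⁻¹' C) =
      pathPrefix (n + m) ⁻¹' (splitTuple n m ⁻¹' B ×ˢ C) := rfl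
  have hsupp : support F ⊆ Set.range (splitTuple n m) := by
    rintro ⟨xs, zs⟩ hF
    by_contra hjoin
    exact hF (by simp [F, M.weight_eq_zero_of_ne (mt mem_range_splitTuple hjoin)])
  calc M.P x (pathPrefix n ⁻¹' B ∩ pathShift n ⁻¹' (pathPrefix m ⁻¹' C))
      = ∑' ws, F (splitTuple n m ws) := by
        rw [hset, measure_pathPrefix_preimage]
        congr 1
        funext ws
        simp only [F, Set.indicator_apply, Set.mem_preimage, Set.mem_prod, ite_and]
        split_ifs <;> simp [M.weight_eq_mul_weight_splitTuple x ws]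
    _ = ∑' p, F p := (splitTuple_injective n m).tsum_eq hsupp
    _ = _ := by
        rw [ENNReal.tsum_prod']
        congr 1
        funext xs
        simp only [F, measure_pathPrefix_preimage, Set.indicator_apply]
        split_ifs <;> simp [← ENNReal.tsum_mul_left, mul_ite]

theorem nullMeasurableSet_eval_eq (x y : E) (n : ℕ) :
    NullMeasurableSet {ω : ℕ → E | ω n = y} (M.P x) :=
  M.nullMeasurableSet_pathPrefix_preimage x {xs : Fin (n + 1) → E | xs (Fin.last n) = y}

theorem measure_eval_eq_inter_pathShift (y x : E) {n m : ℕ} (C : Set (Fin (m + 1) → E)) :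
    M.P y ({ω | ω n = x} ∩ pathShift n ⁻¹' (pathPrefix m ⁻¹' C)) =
      M.P y {ω | ω n = x} * M.P x (pathPrefix m ⁻¹' C) := by
  have hB : {ω : ℕ → E | ω n = x} = pathPrefix n ⁻¹' {xs | xs (Fin.last n) = x} := rfl
  rw [hB, measure_pathPrefix_inter_pathShift, measure_pathPrefix_preimage,
    ← ENNReal.tsum_mul_right]
  congr 1
  funext xs
  by_cases hx : xs (Fin.last n) = x <;> simp [hx]

theorem nullMeasurableSet_frequently_eval_eq (x y : E) :
    NullMeasurableSet {ω : ℕ → E | ∀ N, ∃ n, N ≤ n ∧ ω n = y} (M.P x) := by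
  simp only [Set.ofPred_forall, Set.ofPred_exists]
  exact .iInter fun N => .iUnion fun n =>
    M.nullMeasurableSet_pathPrefix_preimage x {xs : Fin (n + 1) → E | N ≤ n ∧ xs (Fin.last n) = y}

theorem iInf_measure_pathShift_avoiding (hrec : M.Recurrent) (y : E) (n : ℕ) :
    ⨅ m, M.P y (pathShift n ⁻¹' (pathPrefix m ⁻¹' avoiding y m)) = 0 := by
  have := M.prob y
  rw [← Antitone.measure_iInter]
  · refine measure_mono_null ?_ ((prob_compl_eq_zero_iff₀
      (M.nullMeasurableSet_frequently_eval_eq y y)).2 (hrec y))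
    intro ω hω hfreq
    obtain ⟨k, hk, hωk⟩ := hfreq (n + 1)
    refine Set.mem_iInter.1 hω (k - n) ⟨k - n, by omega⟩ (by simp; omega) ?_
    simpa [pathShift, pathPrefix, Nat.add_sub_cancel' (by omega : n ≤ k)] using hωk
  · intro m m' hm ω hω j hj
    exact hω ⟨j, by omega⟩ hj
  · exact fun m => M.nullMeasurableSet_pathPrefix_preimage y
      {ws : Fin (n + m + 1) → E | (splitTuple n m ws).2 ∈ avoiding y m}
  · exact ⟨0, measure_ne_top _ _⟩

theorem iInf_measure_avoiding (hirr : M.Irreducible) (hrec : M.Recurrent) (x y : E) :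
    ⨅ m, M.P x (pathPrefix m ⁻¹' avoiding y m) = 0 := by
  have := M.prob y
  obtain ⟨n, hn⟩ := hirr y x
  -- Markov property at time `n`: `P_y(X_n = x) P_x(no visit to y in (0, m])` is at most
  -- `P_y(no visit to y in (n, n + m])`, which tends to `0` by recurrence.
  have hprod : M.P y {ω | ω n = x} * ⨅ m, M.P x (pathPrefix m ⁻¹' avoiding y m) = 0 := by
    rw [ENNReal.mul_iInf_of_ne hn.ne' (measure_ne_top _ _)]
    refine le_antisymm ((iInf_mono fun m => ?_).trans
      (M.iInf_measure_pathShift_avoiding hrec y n).le) zero_le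
    rw [← measure_eval_eq_inter_pathShift]
    exact measure_mono Set.inter_subset_right
  exact (mul_eq_zero.1 hprod).resolve_left hn.ne'

theorem measure_exists_eval_eq (hirr : M.Irreducible) (hrec : M.Recurrent) (x y : E) :
    M.P x {ω | ∃ k, ω k = y} = 1 := by
  have := M.prob x
  have hmiss : M.P x {ω | ∃ k, ω k = y}ᶜ = 0 := by
    refine nonpos_iff_eq_zero.1 <| (le_iInf fun m => measure_mono ?_).trans
      (M.iInf_measure_avoiding hirr hrec x y).le
    exact fun ω hω j _ hj => hω ⟨j, hj⟩
  have hhit : NullMeasurableSet {ω : ℕ → E | ∃ k, ω k = y} (M.P x) := by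
    simp only [Set.ofPred_exists]
    exact .iUnion fun k => M.nullMeasurableSet_eval_eq x y k
  exact (prob_compl_eq_zero_iff₀ hhit).1 hmiss

end Countable

def IsConcatenationFamily (Q : E → Measure (ℕ → E)) : Prop :=
  ∀ (x y : E) (n : ℕ) (F : (ℕ → E) → ℝ≥0∞),
    (∃ g : (Fin (n + 1) → E) → ℝ≥0∞, F = fun ω => g fun i : Fin (n + 1) => ω i) →
    ∫⁻ ω, F ω * (if ω n = y then 1 else 0) ∂ Q x
      = (∫⁻ ω, F ω * (if ω n = y then 1 else 0) ∂ M.P x) * Q y Set.univ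

variable [Countable E] {M} {Q : E → Measure (ℕ → E)}

theorem IsConcatenationFamily.lintegral_indicator_eq (hQ : M.IsConcatenationFamily Q)
    (x y : E) {n : ℕ} (B : Set (Fin (n + 1) → E)) :
    ∫⁻ ω, (pathPrefix n ⁻¹' B ∩ {ω | ω n = y}).indicator 1 ω ∂Q x =
      M.P x (pathPrefix n ⁻¹' B ∩ {ω | ω n = y}) * Q y Set.univ := by
  have hmul : ∀ ω, (pathPrefix n ⁻¹' B).indicator 1 ω * (if ω n = y then 1 else 0) =
      (pathPrefix n ⁻¹' B ∩ {ω | ω n = y}).indicator (1 : (ℕ → E) → ℝ≥0∞) ω := by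
    intro ω
    by_cases hy : ω n = y <;> simp [Set.indicator_apply, hy]
  rw [← lintegral_congr hmul, hQ x y n ((pathPrefix n ⁻¹' B).indicator 1) ⟨B.indicator 1, rfl⟩,
    lintegral_congr hmul,
    lintegral_indicator_one₀ ((M.nullMeasurableSet_pathPrefix_preimage x B).inter
      (M.nullMeasurableSet_eval_eq x y n))]

theorem IsConcatenationFamily.mul_measure_le (hQ : M.IsConcatenationFamily Q) {c : ℝ≥0∞}
    (hc : ∀ z, Q z Set.univ = c) (x : E) {n : ℕ} (B : Set (Fin (n + 1) → E)) :
    c * M.P x (pathPrefix n ⁻¹' B) ≤ Q x (pathPrefix n ⁻¹' B) := by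
  set S := pathPrefix n ⁻¹' B
  have hdisj : Pairwise (Disjoint on fun z : E => S ∩ {ω | ω n = z}) := fun z z' hz =>
    ((Set.disjoint_singleton.2 hz).preimage fun ω : ℕ → E => ω n).mono
      Set.inter_subset_right Set.inter_subset_right
  have hcover : ⋃ z, S ∩ {ω | ω n = z} = S := by
    ext ω
    simp
  calc c * M.P x S = ∑' z, M.P x (S ∩ {ω | ω n = z}) * Q z Set.univ := by
        simp only [hc, ENNReal.tsum_mul_right]
        rw [← measure_iUnion₀ (fun z z' hz => (hdisj hz).aedisjoint)
          (fun z => (M.nullMeasurableSet_pathPrefix_preimage x B).inter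
            (M.nullMeasurableSet_eval_eq x z n)), hcover, mul_comm]
    _ = ∑' z, ∫⁻ ω, (S ∩ {ω | ω n = z}).indicator 1 ω ∂Q x :=
        tsum_congr fun z => (hQ.lintegral_indicator_eq x z B).symm
    _ ≤ Q x (⋃ z, S ∩ {ω | ω n = z}) := tsum_lintegral_indicator_one_le hdisj
    _ = Q x S := by rw [hcover]

theorem IsConcatenationFamily.measure_univ_le (hQ : M.IsConcatenationFamily Q)
    (hirr : M.Irreducible) (hrec : M.Recurrent) (x y : E) : Q y Set.univ ≤ Q x Set.univ := by
  set H : ℕ → Set (ℕ → E) := fun n =>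
    pathPrefix n ⁻¹' {xs | ∀ k : Fin (n + 1), (k : ℕ) < n → xs k ≠ y} ∩ {ω | ω n = y}
  have hdisj : Pairwise (Disjoint on H) := by
    intro n n' hne
    refine Set.disjoint_left.2 fun ω ⟨hbefore, hat⟩ ⟨hbefore', hat'⟩ => ?_
    rcases lt_or_gt_of_ne hne with h | h
    · exact hbefore' ⟨n, by omega⟩ h hat
    · exact hbefore ⟨n', by omega⟩ h hat'
  have hhit : {ω : ℕ → E | ∃ k, ω k = y} ⊆ ⋃ n, H n := by
    intro ω h
    exact Set.mem_iUnion.2 ⟨Nat.find h, fun k hk => Nat.find_min h hk, Nat.find_spec h⟩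
  calc Q y Set.univ = M.P x {ω | ∃ k, ω k = y} * Q y Set.univ := by
        rw [M.measure_exists_eval_eq hirr hrec, one_mul]
    _ ≤ M.P x (⋃ n, H n) * Q y Set.univ := by gcongr
    _ = ∑' n, ∫⁻ ω, (H n).indicator 1 ω ∂Q x := by
        rw [measure_iUnion₀ (fun n n' hn => (hdisj hn).aedisjoint)
          (fun n => (M.nullMeasurableSet_pathPrefix_preimage x _).inter
            (M.nullMeasurableSet_eval_eq x y n)), ← ENNReal.tsum_mul_right]
        simp only [H, hQ.lintegral_indicator_eq]
    _ ≤ Q x (⋃ n, H n) := tsum_lintegral_indicator_one_le hdisj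
    _ ≤ Q x Set.univ := measure_mono (Set.subset_univ _)

theorem IsConcatenationFamily.eq_smul_of_measure_univ_eq (hQ : M.IsConcatenationFamily Q)
    [∀ x, IsFiniteMeasure (Q x)] {c : ℝ≥0∞} (hc : ∀ z, Q z Set.univ = c) (x : E) :
    Q x = c • M.P x := by
  have := M.prob x
  refine ext_of_generate_finite _ generateFrom_measurableCylinders.symm
    isPiSystem_measurableCylinders (fun s hs => ?_) (by simp [hc])
  obtain ⟨n, B, rfl⟩ := exists_pathPrefix_preimage_eq_of_mem_measurableCylinders hs
  refine (Measure.apply_eq_of_le_of_le_compl (by simp [hc])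
    (MeasurableSet.of_mem_measurableCylinders hs) ?_ ?_).symm
  · simpa using hQ.mul_measure_le hc x B
  · simpa using hQ.mul_measure_le hc x Bᶜ

end MC

/-- If `(Q_x)` is a family of finite measures on path space satisfying the concatenation
identity `Q_x(F_n · 1_{X_n = y}) = E_x[F_n · 1_{X_n = y}] · Q_y(total mass)` for all
functionals `F_n` of the first `n + 1` coordinates, where `(P_x)` is an irreducible
recurrent Markov chain, then there is `c ≥ 0` with `Q_x = c • P_x` for all `x`. -/
theorem finite_concatenation_family_is_multiple_of_markov
    {E : Type*} [Countable E] [MeasurableSpace E]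
    (M : MC E) (hirr : M.Irreducible) (hrec : M.Recurrent)
    (Q : E → Measure (ℕ → E)) (hQfin : ∀ x, IsFiniteMeasure (Q x))
    (hconcat : ∀ (x y : E) (n : ℕ) (F : (ℕ → E) → ℝ≥0∞),
      (∃ g : (Fin (n + 1) → E) → ℝ≥0∞, F = fun ω => g fun i : Fin (n + 1) => ω i) →
      ∫⁻ ω, F ω * (if ω n = y then 1 else 0) ∂ Q x
        = (∫⁻ ω, F ω * (if ω n = y then 1 else 0) ∂ M.P x) * Q y Set.univ) :
    ∃ c : ℝ≥0∞, ∀ x : E, Q x = c • M.P x := by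
  have hQ : M.IsConcatenationFamily Q := hconcat
  obtain ⟨c, hc⟩ : ∃ c, ∀ z, Q z Set.univ = c := by
    rcases isEmpty_or_nonempty E with hE | ⟨⟨x₀⟩⟩
    · exact ⟨0, isEmptyElim⟩
    · exact ⟨Q x₀ Set.univ, fun z => le_antisymm (hQ.measure_univ_le hirr hrec x₀ z)
        (hQ.measure_univ_le hirr hrec z x₀)⟩
  exact ⟨c, hQ.eq_smul_of_measure_univ_eq hc⟩
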